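/- Let G = (V,E) be a simple graph on n vertices, let ε ∈ [0,1], let X ⊆ V, and suppose that every pair {j,l} ∈ Δ(X) satisfies m({j,l}) < 27 n^ε ln n. Then for every set U ⊆ V and every real number m̄ > 0, the number of vertices in U that are not m̄-good for (U,X) is at most 27|U|² n^ε ln n / m̄². -/

import Mathlib

open MeasureTheory

variable {V : Type*} [Fintype V] [DecidableEq V]

/-- `m({j,l})`: the number of common neighbors of `j` and `l` in `G`. -/
def commonNbrs (G : SimpleGraph V) [DecidableRel G.Adj] (j l : V) : ℕ :=
  (Finset.univ.filter fun k => G.Adj j k ∧ G.Adj l k).card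

/-- `{u,v} ∈ Δ(X)`: no vertex of `X` is adjacent to both `u` and `v`. -/
def inDelta (G : SimpleGraph V) (X : Finset V) (u v : V) : Prop :=
  ∀ x ∈ X, ¬ (G.Adj x u ∧ G.Adj x v)

instance (G : SimpleGraph V) [DecidableRel G.Adj] (X : Finset V) (u v : V) :
    Decidable (inDelta G X u v) := by unfold inDelta; infer_instance

/-- `S^X_U(j,k) = {l ∈ U : {j,l} ∈ Δ(X) and {k,l} ∈ E}`. -/
def Sset (G : SimpleGraph V) [DecidableRel G.Adj] (X U : Finset V) (j k : V) : Finset V :=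
  U.filter fun l => l ≠ j ∧ inDelta G X j l ∧ G.Adj k l

/-- `T^X_U(j) = {k ∈ U : {j,k} ∈ E and |S^X_U(j,k)| > m̄}`. -/
noncomputable def Tset (G : SimpleGraph V) [DecidableRel G.Adj] (X U : Finset V) (mb : ℝ)
    (j : V) : Finset V :=
  U.filter fun k => G.Adj j k ∧ mb < ((Sset G X U j k).card : ℝ)

/-- A vertex `j ∈ U` is `m̄`-good for `(U, X)` if `|T^X_U(j)| ≤ m̄`. -/
def IsGood (G : SimpleGraph V) [DecidableRel G.Adj] (X U : Finset V) (mb : ℝ) (j : V) : Prop :=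
  ((Tset G X U mb j).card : ℝ) ≤ mb

noncomputable instance (G : SimpleGraph V) [DecidableRel G.Adj] (X U : Finset V) (mb : ℝ) (j : V) :
    Decidable (IsGood G X U mb j) := by unfold IsGood; infer_instance

/-!
Double counting. For a vertex `j` that is not `m̄`-good, more than `m̄` neighbours `k ∈ T(j)` each
have more than `m̄` vertices in `S(j,k)`, so `m̄² ≤ ∑_{k ∈ T(j)} |S(j,k)|`. Swapping the order of
summation, each `l ∈ U` with `{j,l} ∈ Δ(X)` is counted once per common neighbour of `j` and `l`,
so the sum is at most `|U|·M` when every pair in `Δ(X)` has at most `M` common neighbours.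
Summing over the bad vertices gives `#bad · m̄² ≤ |U|² M`.
-/

open Finset

section

variable (G : SimpleGraph V) [DecidableRel G.Adj] (X U : Finset V)

theorem sum_card_Sset_le_sum_commonNbrs {j : V} {A : Finset V} (hA : ∀ k ∈ A, G.Adj j k) :
    ∑ k ∈ A, #(Sset G X U j k) ≤ ∑ l ∈ U with l ≠ j ∧ inDelta G X j l, commonNbrs G j l := by
  set W := {l ∈ U | l ≠ j ∧ inDelta G X j l}
  have hS : ∀ k, Sset G X U j k = W.bipartiteAbove G.Adj k := fun k => by
    simp only [Sset, W, bipartiteAbove, filter_filter, and_assoc]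
  calc ∑ k ∈ A, #(Sset G X U j k)
      = ∑ l ∈ W, #(A.bipartiteBelow G.Adj l) := by
        simp only [hS, sum_card_bipartiteAbove_eq_sum_card_bipartiteBelow]
    _ ≤ ∑ l ∈ W, commonNbrs G j l := by
        refine sum_le_sum fun l _ => card_le_card fun k hk => ?_
        simp only [bipartiteBelow, mem_filter] at hk
        simpa using ⟨hA k hk.1, hk.2.symm⟩

theorem sum_card_Sset_le {M : ℝ} (hM : 0 ≤ M)
    (hX : ∀ j l : V, j ≠ l → inDelta G X j l → (commonNbrs G j l : ℝ) ≤ M)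
    {j : V} {A : Finset V} (hA : ∀ k ∈ A, G.Adj j k) :
    ∑ k ∈ A, (#(Sset G X U j k) : ℝ) ≤ #U * M := by
  calc ∑ k ∈ A, (#(Sset G X U j k) : ℝ)
      ≤ ∑ l ∈ U with l ≠ j ∧ inDelta G X j l, (commonNbrs G j l : ℝ) := by
        exact_mod_cast sum_card_Sset_le_sum_commonNbrs G X U hA
    _ ≤ ∑ _l ∈ {l ∈ U | l ≠ j ∧ inDelta G X j l}, M :=
        sum_le_sum fun l hl => hX j l (mem_filter.1 hl).2.1.symm (mem_filter.1 hl).2.2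
    _ ≤ #U * M := by
        rw [sum_const, nsmul_eq_mul]
        gcongr
        exact filter_subset _ _

theorem sq_le_sum_card_Sset_of_not_isGood {mb : ℝ} (hmb : 0 ≤ mb) {j : V}
    (hj : ¬ IsGood G X U mb j) :
    mb ^ 2 ≤ ∑ k ∈ Tset G X U mb j, (#(Sset G X U j k) : ℝ) := by
  have hT : mb < #(Tset G X U mb j) := lt_of_not_ge hj
  calc mb ^ 2 ≤ ∑ _k ∈ Tset G X U mb j, mb := by
        rw [sum_const, nsmul_eq_mul, sq]
        gcongr
    _ ≤ ∑ k ∈ Tset G X U mb j, (#(Sset G X U j k) : ℝ) :=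
        sum_le_sum fun k hk => (mem_filter.1 hk).2.2.le

theorem card_not_isGood_mul_sq_le {M : ℝ} (hM : 0 ≤ M)
    (hX : ∀ j l : V, j ≠ l → inDelta G X j l → (commonNbrs G j l : ℝ) ≤ M)
    {mb : ℝ} (hmb : 0 ≤ mb) :
    #{j ∈ U | ¬ IsGood G X U mb j} * mb ^ 2 ≤ #U ^ 2 * M := by
  set B := {j ∈ U | ¬ IsGood G X U mb j}
  calc #B * mb ^ 2 = ∑ _j ∈ B, mb ^ 2 := by rw [sum_const, nsmul_eq_mul]
    _ ≤ ∑ j ∈ B, ∑ k ∈ Tset G X U mb j, (#(Sset G X U j k) : ℝ) :=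
        sum_le_sum fun j hj => sq_le_sum_card_Sset_of_not_isGood G X U hmb (mem_filter.1 hj).2
    _ ≤ ∑ _j ∈ B, #U * M :=
        sum_le_sum fun j _ => sum_card_Sset_le G X U hM hX fun k hk => (mem_filter.1 hk).2.1
    _ = #B * (#U * M) := by rw [sum_const, nsmul_eq_mul]
    _ ≤ #U * (#U * M) := by
        gcongr
        exact filter_subset _ _
    _ = #U ^ 2 * M := by ring

end

theorem count_not_good_vertices_general
    (G : SimpleGraph V) [DecidableRel G.Adj]
    (n : ℕ)
    (ε : ℝ)
    (X : Finset V)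
    (hX : ∀ j l : V, j ≠ l → inDelta G X j l →
      (commonNbrs G j l : ℝ) < 27 * (n : ℝ) ^ ε * Real.log n) :
    ∀ (U : Finset V) (mb : ℝ), 0 < mb →
      (((U.filter fun j => ¬ IsGood G X U mb j).card : ℝ)) ≤
        27 * (U.card : ℝ) ^ 2 * (n : ℝ) ^ ε * Real.log n / mb ^ 2 := by
  intro U mb hmb
  have hM : 0 ≤ 27 * (n : ℝ) ^ ε * Real.log n := by
    have := Real.log_natCast_nonneg n
    positivity
  rw [le_div_iff₀ (by positivity)]
  calc _ ≤ (#U : ℝ) ^ 2 * (27 * (n : ℝ) ^ ε * Real.log n) :=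
        card_not_isGood_mul_sq_le G X U hM (fun j l hjl hjl' => (hX j l hjl hjl').le) hmb.le
    _ = _ := by ring

/-- **Counting argument in the proof of Lemma 3 of the paper.**
Let `G = (V,E)` be a simple graph on `n` vertices, `ε ∈ [0,1]`, and `X ⊆ V`, and suppose
that every pair of (distinct) vertices `{j,l} ∈ Δ(X)` satisfies `m({j,l}) < 27 n^ε ln n`.
Then for every `U ⊆ V` and every real `m̄ > 0`, the number of vertices of `U` that are not
`m̄`-good for `(U,X)` is at most `27 |U|² n^ε ln n / m̄²`. -/
theorem count_not_good_vertices
    (G : SimpleGraph V) [DecidableRel G.Adj]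
    (n : ℕ) (hn : n = Fintype.card V)
    (ε : ℝ) (hε0 : 0 ≤ ε) (hε1 : ε ≤ 1)
    (X : Finset V)
    (hX : ∀ j l : V, j ≠ l → inDelta G X j l →
      (commonNbrs G j l : ℝ) < 27 * (n : ℝ) ^ ε * Real.log n) :
    ∀ (U : Finset V) (mb : ℝ), 0 < mb →
      (((U.filter fun j => ¬ IsGood G X U mb j).card : ℝ)) ≤
        27 * (U.card : ℝ) ^ 2 * (n : ℝ) ^ ε * Real.log n / mb ^ 2 :=
  count_not_good_vertices_general G n ε X hX
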